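/- arXiv:2509.03637 — 2 statements merged into one kernel-verified Lean document; each statement's English description precedes it below -/
import Mathlib

section
/- Let x₁ < x₂ be real numbers with ζ = x₂ − x₁ > 0, and let α, β, m > 0 with α ≠ β. Then ∫_ℝ |x − x₁|^m e^{−α(x−x₁)₊} e^{−β(x₂−x)₊} dx ≤ C(α,β,m) · max((1 + ζ^m) e^{−αζ}, e^{−βζ}), where C(α,β,m) is a constant depending only on α, β, m and (y)₊ = max(y,0) denotes the positive part. -/
/-!
After translating `x₁` to `0` and writing `ζ = x₂ - x₁`, the integrand is bounded pointwise by
`E(ζ) · (w(t) + 2ᵐ w(t - ζ))`, where `E(ζ)` is the right-hand envelope and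
`w(s) = (1 + |s|ᵐ) e^{-γ|s|}` with `γ = min(α, β, |α - β|)`. Left of `0` the integrand decays
at rate `β` from `e^{-βζ}`, right of `ζ` at rate `α` from `(1 + ζᵐ) e^{-αζ}`. On `[0, ζ]` it equals
both `e^{-αζ} tᵐ e^{-(β-α)(ζ-t)}` and `e^{-βζ} tᵐ e^{-(α-β)t}`; whichever has the positive rate
decays away from an endpoint at rate `|α - β| > 0`. Both translates of `w` have the same
integral, so `C = (1 + 2ᵐ) ∫ w`.
-/

open MeasureTheory Set Real

lemma integrable_comp_abs_of_integrableOn_Ioi {E : Type*} [NormedAddCommGroup E] {f : ℝ → E}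
    (hf : IntegrableOn f (Ioi 0)) : Integrable fun x => f |x| := by
  have hpos : IntegrableOn (fun x => f |x|) (Ioi 0) :=
    hf.congr_fun (fun x hx => by rw [abs_of_pos (mem_Ioi.mp hx)]) measurableSet_Ioi
  have hneg : IntegrableOn (fun x => f |x|) (Iic 0) := by
    have hemb : MeasurableEmbedding fun x : ℝ => -x := (Homeomorph.neg ℝ).measurableEmbedding
    rw [← Measure.map_neg_eq_self (volume : Measure ℝ), hemb.integrableOn_map_iff]
    simp_rw [Function.comp_def, abs_neg, neg_preimage, neg_Iic, neg_zero]
    exact Iff.mpr integrableOn_Ici_iff_integrableOn_Ioi hpos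
  rw [← integrableOn_univ, ← Iic_union_Ioi (a := 0)]
  exact hneg.union hpos

lemma rpow_add_le_two_rpow_mul_add {a b m : ℝ} (ha : 0 ≤ a) (hb : 0 ≤ b) (hm : 0 ≤ m) :
    (a + b) ^ m ≤ 2 ^ m * (a ^ m + b ^ m) := by
  have hmax : max a b ^ m ≤ a ^ m + b ^ m := by
    rcases max_choice a b with h | h <;> rw [h] <;>
      linarith [rpow_nonneg ha m, rpow_nonneg hb m]
  calc (a + b) ^ m ≤ (2 * max a b) ^ m :=
        rpow_le_rpow (add_nonneg ha hb) (by linarith [le_max_left a b, le_max_right a b]) hm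
    _ = 2 ^ m * max a b ^ m := mul_rpow zero_le_two (le_max_of_le_left ha)
    _ ≤ 2 ^ m * (a ^ m + b ^ m) := by gcongr

noncomputable def polyExpWeight (m γ s : ℝ) : ℝ := (1 + |s| ^ m) * exp (-γ * |s|)

lemma polyExpWeight_pos (m γ s : ℝ) : 0 < polyExpWeight m γ s := by
  unfold polyExpWeight
  have := rpow_nonneg (abs_nonneg s) m
  positivity

lemma integrable_polyExpWeight {m γ : ℝ} (hm : -1 < m) (hγ : 0 < γ) :
    Integrable (polyExpWeight m γ) := by
  have hpow : IntegrableOn (fun s : ℝ => s ^ m * exp (-γ * s)) (Ioi 0) := by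
    simpa only [rpow_one] using integrableOn_rpow_mul_exp_neg_mul_rpow hm one_pos hγ
  have h : IntegrableOn (fun s : ℝ => (1 + s ^ m) * exp (-γ * s)) (Ioi 0) := by
    refine ((exp_neg_integrableOn_Ioi 0 hγ).add hpow).congr_fun (fun s _ => ?_) measurableSet_Ioi
    simp only [Pi.add_apply]
    ring
  exact integrable_comp_abs_of_integrableOn_Ioi h

lemma integral_polyExpWeight_pos {m γ : ℝ} (hm : -1 < m) (hγ : 0 < γ) :
    0 < ∫ s, polyExpWeight m γ s := by
  rw [integral_pos_iff_support_of_nonneg (fun s => (polyExpWeight_pos m γ s).le)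
    (integrable_polyExpWeight hm hγ)]
  have hsupport : Function.support (polyExpWeight m γ) = univ :=
    eq_univ_of_forall fun s => (polyExpWeight_pos m γ s).ne'
  simp [hsupport]

lemma mul_exp_le_polyExpWeight {m γ c a s : ℝ} (ha : 0 ≤ a) (ha' : a ≤ 1 + |s| ^ m)
    (hγc : γ ≤ c) : a * exp (-c * |s|) ≤ polyExpWeight m γ s :=
  mul_le_mul ha' (exp_le_exp.mpr (by nlinarith [abs_nonneg s])) (exp_nonneg _)
    (by linarith [rpow_nonneg (abs_nonneg s) m])

noncomputable def envelope (α β m ζ : ℝ) : ℝ := max ((1 + ζ ^ m) * exp (-α * ζ)) (exp (-β * ζ))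

lemma envelope_nonneg (α β m ζ : ℝ) : 0 ≤ envelope α β m ζ :=
  (exp_nonneg _).trans (le_max_right _ _)

noncomputable def profile (α β m ζ t : ℝ) : ℝ :=
  |t| ^ m * exp (-α * max t 0) * exp (-β * max (ζ - t) 0)

lemma profile_nonneg (α β m ζ t : ℝ) : 0 ≤ profile α β m ζ t := by
  unfold profile
  have := rpow_nonneg (abs_nonneg t) m
  positivity

section PointwiseBound

variable {α β m ζ γ t : ℝ}

lemma profile_le_of_nonpos (hζ : 0 ≤ ζ) (hγβ : γ ≤ β) (ht : t ≤ 0) :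
    profile α β m ζ t ≤ envelope α β m ζ * polyExpWeight m γ t := by
  have hprofile : profile α β m ζ t = exp (-β * ζ) * (|t| ^ m * exp (-β * |t|)) := by
    rw [profile, max_eq_right ht, max_eq_left (by linarith), abs_of_nonpos ht, mul_zero,
      exp_zero, mul_one, mul_left_comm, ← exp_add]
    ring_nf
  rw [hprofile]
  exact mul_le_mul (le_max_right _ _)
    (mul_exp_le_polyExpWeight (rpow_nonneg (abs_nonneg t) m) (by linarith) hγβ)
    (by positivity) (envelope_nonneg α β m ζ)

lemma profile_of_mem_Icc (ht₀ : 0 ≤ t) (htζ : t ≤ ζ) :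
    profile α β m ζ t = t ^ m * exp (-α * t) * exp (-β * (ζ - t)) := by
  rw [profile, max_eq_left ht₀, max_eq_left (by linarith), abs_of_nonneg ht₀]

lemma profile_le_of_mem_Icc_of_le (hm : 0 ≤ m) (hγδ : γ ≤ |α - β|) (hαβ : α ≤ β)
    (ht₀ : 0 ≤ t) (htζ : t ≤ ζ) :
    profile α β m ζ t ≤ envelope α β m ζ * polyExpWeight m γ (t - ζ) := by
  have hprofile : profile α β m ζ t =
      t ^ m * exp (-α * ζ) * exp (-|α - β| * |t - ζ|) := by
    rw [profile_of_mem_Icc ht₀ htζ, abs_of_nonpos (by linarith : α - β ≤ 0),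
      abs_of_nonpos (by linarith : t - ζ ≤ 0), mul_assoc, mul_assoc, ← exp_add, ← exp_add]
    ring_nf
  have hζ : ζ ^ m * exp (-α * ζ) ≤ envelope α β m ζ :=
    le_trans (by gcongr; linarith) (le_max_left _ _)
  rw [hprofile]
  refine mul_le_mul (le_trans (by gcongr) hζ) ?_ (exp_nonneg _) (envelope_nonneg α β m ζ)
  simpa using mul_exp_le_polyExpWeight zero_le_one
    (le_add_of_nonneg_right (rpow_nonneg (abs_nonneg (t - ζ)) m)) hγδ

lemma profile_le_of_mem_Icc_of_ge (hγδ : γ ≤ |α - β|) (hβα : β ≤ α)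
    (ht₀ : 0 ≤ t) (htζ : t ≤ ζ) :
    profile α β m ζ t ≤ envelope α β m ζ * polyExpWeight m γ t := by
  have hprofile : profile α β m ζ t =
      exp (-β * ζ) * (|t| ^ m * exp (-|α - β| * |t|)) := by
    rw [profile_of_mem_Icc ht₀ htζ, abs_of_nonneg (by linarith : 0 ≤ α - β),
      abs_of_nonneg ht₀, mul_assoc, ← exp_add, mul_left_comm, ← exp_add]
    ring_nf
  rw [hprofile]
  exact mul_le_mul (le_max_right _ _)
    (mul_exp_le_polyExpWeight (rpow_nonneg (abs_nonneg t) m) (by linarith) hγδ)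
    (by positivity) (envelope_nonneg α β m ζ)

lemma profile_le_of_le (hm : 0 ≤ m) (hζ : 0 ≤ ζ) (hγα : γ ≤ α) (ht : ζ ≤ t) :
    profile α β m ζ t ≤ envelope α β m ζ * (2 ^ m * polyExpWeight m γ (t - ζ)) := by
  obtain ⟨s, hs, rfl⟩ : ∃ s, 0 ≤ s ∧ t = s + ζ := ⟨t - ζ, by linarith, by ring⟩
  rw [add_sub_cancel_right]
  have hprofile : profile α β m ζ (s + ζ) = (s + ζ) ^ m * (exp (-α * ζ) * exp (-α * |s|)) := by
    rw [profile, max_eq_left (by linarith), max_eq_right (by linarith), abs_of_nonneg hs,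
      abs_of_nonneg (by linarith), mul_zero, exp_zero, mul_one, ← exp_add]
    ring_nf
  have hsum : s ^ m + ζ ^ m ≤ (1 + ζ ^ m) * (1 + |s| ^ m) := by
    rw [abs_of_nonneg hs]
    nlinarith [rpow_nonneg hs m, rpow_nonneg hζ m]
  calc profile α β m ζ (s + ζ)
      ≤ 2 ^ m * ((1 + ζ ^ m) * (1 + |s| ^ m)) * (exp (-α * ζ) * exp (-α * |s|)) := by
        rw [hprofile]
        gcongr
        exact (rpow_add_le_two_rpow_mul_add hs hζ hm).trans (by gcongr)
    _ = 2 ^ m * ((1 + ζ ^ m) * exp (-α * ζ)) * ((1 + |s| ^ m) * exp (-α * |s|)) := by ring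
    _ ≤ 2 ^ m * envelope α β m ζ * polyExpWeight m γ s :=
        mul_le_mul (mul_le_mul_of_nonneg_left (le_max_left _ _) (by positivity))
          (mul_exp_le_polyExpWeight (by positivity) le_rfl hγα) (by positivity)
          (mul_nonneg (by positivity) (envelope_nonneg α β m ζ))
    _ = envelope α β m ζ * (2 ^ m * polyExpWeight m γ s) := by ring

lemma profile_le (hm : 0 ≤ m) (hζ : 0 ≤ ζ) (hγα : γ ≤ α) (hγβ : γ ≤ β) (hγδ : γ ≤ |α - β|)
    (t : ℝ) : profile α β m ζ t ≤
      envelope α β m ζ * (polyExpWeight m γ t + 2 ^ m * polyExpWeight m γ (t - ζ)) := by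
  have hE := envelope_nonneg α β m ζ
  have hA : 0 ≤ envelope α β m ζ * polyExpWeight m γ t :=
    mul_nonneg hE (polyExpWeight_pos m γ t).le
  have hB : 0 ≤ envelope α β m ζ * (2 ^ m * polyExpWeight m γ (t - ζ)) :=
    mul_nonneg hE (mul_nonneg (by positivity) (polyExpWeight_pos m γ (t - ζ)).le)
  rw [mul_add]
  rcases le_or_gt t 0 with ht₀ | ht₀
  · exact (profile_le_of_nonpos hζ hγβ ht₀).trans (le_add_of_nonneg_right hB)
  rcases le_or_gt ζ t with htζ | htζ
  · exact (profile_le_of_le hm hζ hγα htζ).trans (le_add_of_nonneg_left hA)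
  rcases le_total α β with hαβ | hβα
  · refine (profile_le_of_mem_Icc_of_le hm hγδ hαβ ht₀.le htζ.le).trans
      ((mul_le_mul_of_nonneg_left ?_ hE).trans (le_add_of_nonneg_left hA))
    exact le_mul_of_one_le_left (polyExpWeight_pos m γ (t - ζ)).le (one_le_rpow one_le_two hm)
  · exact (profile_le_of_mem_Icc_of_ge hγδ hβα ht₀.le htζ.le).trans (le_add_of_nonneg_right hB)

end PointwiseBound

theorem stmt1 (α β m : ℝ) (hα : 0 < α) (hβ : 0 < β) (hm : 0 < m) (hαβ : α ≠ β) :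
    ∃ C : ℝ, 0 < C ∧ ∀ x₁ x₂ : ℝ, x₁ < x₂ →
      (∫ x : ℝ, |x - x₁| ^ m * Real.exp (-α * max (x - x₁) 0) *
          Real.exp (-β * max (x₂ - x) 0)) ≤
        C * max ((1 + (x₂ - x₁) ^ m) * Real.exp (-α * (x₂ - x₁)))
              (Real.exp (-β * (x₂ - x₁))) := by
  set γ := min (min α β) |α - β|
  have hγ : 0 < γ := lt_min (lt_min hα hβ) (abs_pos.mpr (sub_ne_zero.mpr hαβ))
  have hm' : -1 < m := by linarith
  have hw := integrable_polyExpWeight hm' hγ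
  refine ⟨(1 + 2 ^ m) * ∫ s, polyExpWeight m γ s,
    mul_pos (by positivity) (integral_polyExpWeight_pos hm' hγ), fun x₁ x₂ h => ?_⟩
  set E := envelope α β m (x₂ - x₁)
  have hbound (x : ℝ) : profile α β m (x₂ - x₁) (x - x₁) ≤
      E * (polyExpWeight m γ (x - x₁) + 2 ^ m * polyExpWeight m γ (x - x₂)) := by
    simpa only [sub_sub_sub_cancel_right] using profile_le hm.le (sub_pos.mpr h).le
      ((min_le_left _ _).trans (min_le_left _ _)) ((min_le_left _ _).trans (min_le_right _ _))
      (min_le_right _ _) (x - x₁)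
  calc (∫ x, |x - x₁| ^ m * exp (-α * max (x - x₁) 0) * exp (-β * max (x₂ - x) 0))
      = ∫ x, profile α β m (x₂ - x₁) (x - x₁) := by
        simp only [profile, sub_sub_sub_cancel_right]
    _ ≤ ∫ x, E * (polyExpWeight m γ (x - x₁) + 2 ^ m * polyExpWeight m γ (x - x₂)) :=
        integral_mono_of_nonneg (.of_forall fun x => profile_nonneg _ _ _ _ _)
          (((hw.comp_sub_right x₁).add ((hw.comp_sub_right x₂).const_mul _)).const_mul _)
          (.of_forall hbound)
    _ = (1 + 2 ^ m) * (∫ s, polyExpWeight m γ s) * E := by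
        rw [integral_const_mul, integral_add (hw.comp_sub_right x₁)
          ((hw.comp_sub_right x₂).const_mul _), integral_const_mul,
          integral_sub_right_eq_self (polyExpWeight m γ),
          integral_sub_right_eq_self (polyExpWeight m γ)]
        ring
end

section
/- Let α > 1 be a real number. Then there exists a constant C = C(α) such that for all t ≥ 0, ∫₀ᵗ (1+t−s)^{−α} (1+s)^{−1} ds ≤ C · max((1+t)^{−1}, log(2+t)·(1+t)^{−α}). -/
/-!
Split `[0, t]` at `t / 2`: on the first half `(1 + t - s)^(-α) ≤ (1 + t/2)^(-α)`, on the second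
`(1 + s)^(-1) ≤ (1 + t/2)^(-1)`. Hence the integral is at most
`(1 + t/2)^(-α) log (1 + t) + (1 + t/2)^(-1) ∫₀^∞ (1 + x)^(-α) dx`, and since
`log (1 + t) ≤ (1 + t)^(α - 1) / (α - 1)` both terms are `O((1 + t)^(-1))`.
-/

open Real Set intervalIntegral

lemma mul_le_mul_add_mul_of_le_or_le {x y a b : ℝ} (hx : 0 ≤ x) (hy : 0 ≤ y)
    (ha : 0 ≤ a) (hb : 0 ≤ b) (h : x ≤ a ∨ y ≤ b) : x * y ≤ a * y + b * x := by
  rcases h with h | h <;> nlinarith [mul_nonneg ha hy, mul_nonneg hb hx]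

theorem integral_comp_sub_mul_le_of_antitoneOn {f g : ℝ → ℝ} {t : ℝ} (ht : 0 ≤ t)
    (hf : AntitoneOn f (Icc 0 t)) (hg : AntitoneOn g (Icc 0 t))
    (hf_cont : ContinuousOn f (Icc 0 t)) (hg_cont : ContinuousOn g (Icc 0 t))
    (hf_nonneg : ∀ x ∈ Icc 0 t, 0 ≤ f x) (hg_nonneg : ∀ x ∈ Icc 0 t, 0 ≤ g x) :
    ∫ s in (0:ℝ)..t, f (t - s) * g s ≤
      f (t / 2) * (∫ s in (0:ℝ)..t, g s) + g (t / 2) * ∫ s in (0:ℝ)..t, f s := by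
  have hmid : t / 2 ∈ Icc 0 t := ⟨by linarith, by linarith⟩
  have hreflect : MapsTo (fun s => t - s) (Icc 0 t) (Icc 0 t) :=
    fun s hs => ⟨by linarith [hs.2], by linarith [hs.1]⟩
  have hf_cont' : ContinuousOn (fun s => f (t - s)) (Icc 0 t) :=
    hf_cont.comp (continuousOn_const.sub continuousOn_id) hreflect
  rw [← uIcc_of_le ht] at hf_cont' hg_cont
  have hpoint : ∀ s ∈ Icc 0 t, f (t - s) * g s ≤ f (t / 2) * g s + g (t / 2) * f (t - s) := by
    intro s hs
    refine mul_le_mul_add_mul_of_le_or_le (hf_nonneg _ (hreflect hs)) (hg_nonneg s hs)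
      (hf_nonneg _ hmid) (hg_nonneg _ hmid) ?_
    rcases le_total s (t / 2) with hs' | hs'
    · exact .inl (hf hmid (hreflect hs) (by linarith))
    · exact .inr (hg hmid hs hs')
  calc ∫ s in (0:ℝ)..t, f (t - s) * g s
      ≤ ∫ s in (0:ℝ)..t, (f (t / 2) * g s + g (t / 2) * f (t - s)) :=
        integral_mono_on ht (hf_cont'.mul hg_cont).intervalIntegrable
          ((continuousOn_const.mul hg_cont).add
            (continuousOn_const.mul hf_cont')).intervalIntegrable hpoint
    _ = f (t / 2) * (∫ s in (0:ℝ)..t, g s) + g (t / 2) * ∫ s in (0:ℝ)..t, f s := by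
        rw [integral_add (hg_cont.intervalIntegrable.const_mul _)
          (hf_cont'.intervalIntegrable.const_mul _), intervalIntegral.integral_const_mul,
          intervalIntegral.integral_const_mul,
          integral_comp_sub_left f t, sub_self, sub_zero]

lemma antitoneOn_one_add_rpow {p : ℝ} (hp : p ≤ 0) :
    AntitoneOn (fun x : ℝ => (1 + x) ^ p) (Ioi (-1)) := fun x hx _ _ hxy =>
  rpow_le_rpow_of_nonpos (by linarith [mem_Ioi.1 hx]) (by linarith) hp

lemma continuousOn_one_add_rpow (p : ℝ) :
    ContinuousOn (fun x : ℝ => (1 + x) ^ p) (Ioi (-1)) :=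
  (continuous_const_add 1).continuousOn.rpow_const fun x hx =>
    .inl (by linarith [mem_Ioi.1 hx] : (0:ℝ) < 1 + x).ne'

lemma integral_one_add_rpow_neg_one {t : ℝ} (ht : -1 < t) :
    ∫ s in (0:ℝ)..t, (1 + s) ^ (-(1:ℝ)) = log (1 + t) := by
  simp only [rpow_neg_one]
  rw [integral_comp_add_left (fun x : ℝ => x⁻¹) 1, add_zero,
    integral_inv_of_pos one_pos (by linarith), div_one]

lemma integral_one_add_rpow_neg_le {α t : ℝ} (hα : 1 < α) (ht : 0 ≤ t) :
    ∫ s in (0:ℝ)..t, (1 + s) ^ (-α) ≤ 1 / (α - 1) := by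
  have h0 : (0:ℝ) ∉ uIcc 1 (1 + t) := by
    rw [uIcc_of_le (by linarith)]
    exact fun h => by linarith [h.1]
  rw [integral_comp_add_left (fun x : ℝ => x ^ (-α)) 1, add_zero,
    integral_rpow (.inr ⟨by linarith, h0⟩), one_rpow, ← neg_div_neg_eq,
    show -(-α + 1) = α - 1 by ring]
  have hpow_nonneg := rpow_nonneg (by linarith : (0:ℝ) ≤ 1 + t) (-α + 1)
  exact div_le_div_of_nonneg_right (by linarith) (by linarith)

lemma one_add_half_rpow_neg_le {β t : ℝ} (hβ : 0 ≤ β) (ht : -1 < t) :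
    (1 + t / 2) ^ (-β) ≤ 2 ^ β * (1 + t) ^ (-β) := by
  calc (1 + t / 2) ^ (-β) ≤ ((1 + t) / 2) ^ (-β) :=
        rpow_le_rpow_of_nonpos (by linarith) (by linarith) (by linarith)
    _ = 2 ^ β * (1 + t) ^ (-β) := by
        rw [div_rpow (by linarith) zero_le_two, rpow_neg zero_le_two, div_inv_eq_mul, mul_comm]

theorem integral_one_add_sub_rpow_mul_inv_le {α t : ℝ} (hα : 1 < α) (ht : 0 ≤ t) :
    ∫ s in (0:ℝ)..t, (1 + t - s) ^ (-α) * (1 + s) ^ (-(1:ℝ)) ≤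
      (2 ^ α + 2) / (α - 1) * (1 + t) ^ (-(1:ℝ)) := by
  have hIcc : Icc 0 t ⊆ Ioi (-1) := fun x hx => mem_Ioi.2 (by linarith [hx.1])
  have hnonneg (p : ℝ) : ∀ x ∈ Icc 0 t, 0 ≤ (1 + x) ^ p := fun x hx =>
    rpow_nonneg (by linarith [hx.1]) p
  have hsplit := integral_comp_sub_mul_le_of_antitoneOn ht
    ((antitoneOn_one_add_rpow (p := -α) (by linarith)).mono hIcc)
    ((antitoneOn_one_add_rpow (p := -1) (by norm_num)).mono hIcc)
    ((continuousOn_one_add_rpow _).mono hIcc) ((continuousOn_one_add_rpow _).mono hIcc)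
    (hnonneg _) (hnonneg _)
  simp only [← add_sub_assoc, integral_one_add_rpow_neg_one (by linarith : -1 < t)] at hsplit
  have hpow : (1 + t) ^ (-α) * (1 + t) ^ (α - 1) = (1 + t) ^ (-(1:ℝ)) := by
    rw [← rpow_add (by linarith)]
    ring_nf
  calc _ ≤ _ := hsplit
    _ ≤ 2 ^ α * (1 + t) ^ (-α) * ((1 + t) ^ (α - 1) / (α - 1)) +
          2 ^ (1:ℝ) * (1 + t) ^ (-(1:ℝ)) * (1 / (α - 1)) :=
        add_le_add
          (mul_le_mul (one_add_half_rpow_neg_le (by linarith) (by linarith))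
            (log_le_rpow_div (by linarith) (by linarith)) (log_nonneg (by linarith))
            (by positivity))
          (mul_le_mul (one_add_half_rpow_neg_le zero_le_one (by linarith))
            (integral_one_add_rpow_neg_le hα ht) (intervalIntegral.integral_nonneg ht (hnonneg _))
            (by positivity))
    _ = (2 ^ α + 2) / (α - 1) * (1 + t) ^ (-(1:ℝ)) := by
        rw [mul_assoc (2 ^ α), ← mul_div_assoc, hpow, rpow_one]
        ring

theorem stmt5 (α : ℝ) (hα : 1 < α) :
    ∃ C : ℝ, 0 < C ∧ ∀ t : ℝ, 0 ≤ t →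
      (∫ s in (0:ℝ)..t, (1 + t - s) ^ (-α) * (1 + s) ^ (-(1:ℝ))) ≤
        C * max ((1 + t) ^ (-(1:ℝ))) (Real.log (2 + t) * (1 + t) ^ (-α)) := by
  have hC : 0 < (2 ^ α + 2) / (α - 1) := by
    have := rpow_pos_of_pos two_pos α
    exact div_pos (by linarith) (by linarith)
  exact ⟨_, hC, fun t ht => (integral_one_add_sub_rpow_mul_inv_le hα ht).trans
    (mul_le_mul_of_nonneg_left (le_max_left _ _) hC.le)⟩
end
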